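/- arXiv:1004.4908 — 3 statements merged into one kernel-verified Lean document; each statement's English description precedes it below -/
import Mathlib

section
/- Let Y be a real random variable with E[exp(γY²)] < ∞ for some γ > 0, and (Yᵢ) independent copies of Y. Then for every natural number k, sup_{n≥2} E[((2 ln n)^{-1/2} max{Y₁,…,Yₙ})₊]^k < ∞, where x₊ denotes the positive part. -/
/-! With `a = √(2/γ)` and `s = √(2 log n)`, the event `max Yᵢ ≤ a s` contributes at most `aᵏ`.
On its complement some `Yᵢ > a s`, and then `Yᵢ₊ᵏ ≲ exp(γ Yᵢ²/2) ≤ exp(γ Yᵢ²) / n²`, because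
`γ (a s)² / 2 = 2 log n`. Summing over the `n` indices and taking expectations leaves
`aᵏ + C E[exp(γ Y²)] / n`, which is bounded in `n`. -/

open MeasureTheory Filter

lemma pow_max_zero_le_mul_exp {γ : ℝ} (hγ : 0 < γ) (k : ℕ) (y : ℝ) :
    max y 0 ^ k ≤ (1 + k.factorial * (2 / γ) ^ k) * Real.exp (γ / 2 * y ^ 2) := by
  set x := max y 0
  have hx : 0 ≤ x := le_max_right _ _
  have h_one_add : x ^ k ≤ 1 + (x ^ 2) ^ k := by
    rcases le_or_gt x 1 with h | h
    · linarith [pow_le_one₀ (n := k) hx h, pow_nonneg (sq_nonneg x) k]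
    · rw [← pow_mul]
      linarith [pow_le_pow_right₀ h.le (show k ≤ 2 * k by omega)]
  have h_sq : (x ^ 2) ^ k ≤ (y ^ 2) ^ k := by
    refine pow_le_pow_left₀ (sq_nonneg x) ?_ k
    rcases le_total y 0 with h | h <;> simp [x, h, sq_nonneg]
  have h_exp : (y ^ 2) ^ k ≤ k.factorial * (2 / γ) ^ k * Real.exp (γ / 2 * y ^ 2) := by
    have := Real.pow_div_factorial_le_exp (x := γ / 2 * y ^ 2) (by positivity) k
    rw [div_le_iff₀ (by positivity)] at this
    calc (y ^ 2) ^ k = (2 / γ) ^ k * (γ / 2 * y ^ 2) ^ k := by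
          rw [← mul_pow]; field_simp
      _ ≤ _ := by nlinarith [pow_pos (div_pos two_pos hγ) k]
  have h_one : 1 ≤ Real.exp (γ / 2 * y ^ 2) := Real.one_le_exp (by positivity)
  nlinarith [h_sq.trans h_exp]

lemma pow_max_inv_mul_zero_le {γ : ℝ} (hγ : 0 < γ) (k : ℕ) {s : ℝ} (hs : 1 ≤ s) (y : ℝ) :
    max (s⁻¹ * y) 0 ^ k ≤ Real.sqrt (2 / γ) ^ k +
      (1 + k.factorial * (2 / γ) ^ k) * Real.exp (γ * y ^ 2) * Real.exp (-s ^ 2) := by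
  set a := Real.sqrt (2 / γ)
  have ha : 0 ≤ a := Real.sqrt_nonneg _
  have h_rest : 0 ≤ (1 + k.factorial * (2 / γ) ^ k) * Real.exp (γ * y ^ 2) * Real.exp (-s ^ 2) := by
    positivity
  rcases le_or_gt (s⁻¹ * y) a with h | h
  · linarith [pow_le_pow_left₀ (le_max_right _ _) (max_le h ha) k]
  have hs0 : 0 < s := by linarith
  have hy : a * s < y := by rwa [← lt_div_iff₀ hs0, ← inv_mul_eq_div]
  have hy0 : 0 < y := by nlinarith
  have h_max : max (s⁻¹ * y) 0 ≤ max y 0 := by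
    gcongr
    exact mul_le_of_le_one_left hy0.le (inv_le_one_of_one_le₀ hs)
  -- `γ (a s)² / 2 = s²`, so beyond `a s` half of the exponent `γ y²` absorbs `exp (s²)`.
  have h_exp : γ / 2 * y ^ 2 ≤ γ * y ^ 2 + -s ^ 2 := by
    have : γ / 2 * (a * s) ^ 2 = s ^ 2 := by
      rw [mul_pow, Real.sq_sqrt (by positivity)]; field_simp
    nlinarith [mul_lt_mul'' hy hy (by positivity) (by positivity)]
  calc max (s⁻¹ * y) 0 ^ k ≤ max y 0 ^ k := pow_le_pow_left₀ (le_max_right _ _) h_max k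
    _ ≤ (1 + k.factorial * (2 / γ) ^ k) * Real.exp (γ / 2 * y ^ 2) :=
      pow_max_zero_le_mul_exp hγ k y
    _ ≤ (1 + k.factorial * (2 / γ) ^ k) * Real.exp (γ * y ^ 2) * Real.exp (-s ^ 2) := by
      rw [mul_assoc, ← Real.exp_add]; gcongr
    _ ≤ _ := le_add_of_nonneg_left (by positivity)

lemma pow_max_inv_mul_sup'_zero_le {γ : ℝ} (hγ : 0 < γ) (k : ℕ) {s : ℝ} (hs : 1 ≤ s)
    {ι : Type*} {t : Finset ι} (ht : t.Nonempty) (f : ι → ℝ) :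
    max (s⁻¹ * t.sup' ht f) 0 ^ k ≤ Real.sqrt (2 / γ) ^ k +
      (1 + k.factorial * (2 / γ) ^ k) * Real.exp (-s ^ 2) *
        ∑ i ∈ t, Real.exp (γ * f i ^ 2) := by
  obtain ⟨i, hi, h_sup⟩ := t.exists_mem_eq_sup' ht f
  have h_single : Real.exp (γ * f i ^ 2) ≤ ∑ j ∈ t, Real.exp (γ * f j ^ 2) :=
    Finset.single_le_sum (f := fun j => Real.exp (γ * f j ^ 2)) (fun _ _ => by positivity) hi
  calc max (s⁻¹ * t.sup' ht f) 0 ^ k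
      ≤ Real.sqrt (2 / γ) ^ k +
          (1 + k.factorial * (2 / γ) ^ k) * Real.exp (γ * f i ^ 2) * Real.exp (-s ^ 2) := by
        rw [h_sup]; exact pow_max_inv_mul_zero_le hγ k hs (f i)
    _ ≤ _ := by
        rw [mul_right_comm]; gcongr

lemma one_le_sqrt_two_mul_log {n : ℕ} (hn : 2 ≤ n) : 1 ≤ Real.sqrt (2 * Real.log n) := by
  rw [Real.one_le_sqrt]
  have : Real.log 2 ≤ Real.log n := Real.log_le_log two_pos (by exact_mod_cast hn)
  linarith [Real.log_two_gt_d9]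

lemma natCast_mul_exp_neg_sq_sqrt_two_mul_log_le_one {n : ℕ} (hn : 1 ≤ n) :
    (n : ℝ) * Real.exp (-Real.sqrt (2 * Real.log n) ^ 2) ≤ 1 := by
  have hn1 : (1 : ℝ) ≤ n := by exact_mod_cast hn
  have hlog : 0 ≤ Real.log n := Real.log_nonneg hn1
  rw [Real.sq_sqrt (by positivity), Real.exp_neg, mul_comm 2,
    ← Real.rpow_def_of_pos (by positivity), Real.rpow_two, mul_inv_le_iff₀ (by positivity)]
  nlinarith

lemma integral_finsetSum_comp_eq_card_mul {Ω ι : Type*} [MeasurableSpace Ω] {μ : Measure Ω}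
    {Y : ι → Ω → ℝ} {i₀ : ι} (hY : ∀ i, ProbabilityTheory.IdentDistrib (Y i) (Y i₀) μ μ)
    {g : ℝ → ℝ} (hg : Measurable g) (hint : Integrable (fun ω => g (Y i₀ ω)) μ) (t : Finset ι) :
    ∫ ω, ∑ i ∈ t, g (Y i ω) ∂μ = t.card * ∫ ω, g (Y i₀ ω) ∂μ := by
  have hint_i : ∀ i, Integrable (fun ω => g (Y i ω)) μ := fun i =>
    ((hY i).comp hg).integrable_iff.mpr hint
  have h_eq : ∀ i, ∫ ω, g (Y i ω) ∂μ = ∫ ω, g (Y i₀ ω) ∂μ := fun i =>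
    ((hY i).comp hg).integral_eq
  rw [integral_finsetSum t fun i _ => hint_i i, Finset.sum_congr rfl fun i _ => h_eq i,
    Finset.sum_const, nsmul_eq_mul]

theorem sup_moment_max_of_iid_exp_square
    {Ω : Type*} [MeasurableSpace Ω] {μ : Measure Ω} [IsProbabilityMeasure μ]
    (γ : ℝ) (hγ : 0 < γ)
    (Y : ℕ → Ω → ℝ) (hmeas : ∀ i, Measurable (Y i))
    (hident : ∀ i, Measure.map (Y i) μ = Measure.map (Y 0) μ)
    (hexp : Integrable (fun ω => Real.exp (γ * (Y 0 ω) ^ 2)) μ)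
    (k : ℕ) :
    ∃ M : ℝ, ∀ (n : ℕ) (hn : 2 ≤ n),
      (∫ ω, (max ((Real.sqrt (2 * Real.log n))⁻¹ *
          (Finset.range n).sup' (Finset.nonempty_range_iff.mpr (by omega))
            (fun i => Y i ω)) 0) ^ k ∂μ) ≤ M := by
  have hY : ∀ i, ProbabilityTheory.IdentDistrib (Y i) (Y 0) μ μ := fun i =>
    ⟨(hmeas i).aemeasurable, (hmeas 0).aemeasurable, hident i⟩
  have hg : Measurable fun y : ℝ => Real.exp (γ * y ^ 2) := by fun_prop
  have hint_sum : ∀ n, Integrable (fun ω => ∑ i ∈ Finset.range n, Real.exp (γ * Y i ω ^ 2)) μ :=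
    fun n => integrable_finsetSum _ fun i _ => ((hY i).comp hg).integrable_iff.mpr hexp
  set a := Real.sqrt (2 / γ)
  set C := 1 + k.factorial * (2 / γ) ^ k
  set I := ∫ ω, Real.exp (γ * Y 0 ω ^ 2) ∂μ
  have hCI : 0 ≤ C * I := mul_nonneg (by positivity) (integral_nonneg fun _ => by positivity)
  refine ⟨a ^ k + C * I, fun n hn => ?_⟩
  set s := Real.sqrt (2 * Real.log n)
  have hns : (n : ℝ) * Real.exp (-s ^ 2) ≤ 1 :=
    natCast_mul_exp_neg_sq_sqrt_two_mul_log_le_one (by omega)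
  calc _ ≤ ∫ ω, (a ^ k + C * Real.exp (-s ^ 2) *
        ∑ i ∈ Finset.range n, Real.exp (γ * Y i ω ^ 2)) ∂μ :=
        integral_mono_of_nonneg (ae_of_all _ fun _ => by positivity)
          ((integrable_const _).add ((hint_sum n).const_mul _))
          (ae_of_all _ fun ω => pow_max_inv_mul_sup'_zero_le hγ k (one_le_sqrt_two_mul_log hn) _ _)
    _ = a ^ k + C * I * (n * Real.exp (-s ^ 2)) := by
        rw [integral_add (integrable_const _) ((hint_sum n).const_mul _), integral_const,
          integral_const_mul, integral_finsetSum_comp_eq_card_mul hY hg hexp]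
        simp only [probReal_univ, one_smul, Finset.card_range]
        ring
    _ ≤ a ^ k + C * I := by
        linarith [mul_le_mul_of_nonneg_left hns hCI]
end

section
/- Let Y be a real random variable with E[exp(γY²)] < ∞ for some γ > 0, and (Yᵢ) independent copies. Then limsup_{n→∞} E[((2 ln n)^{-1/2} max{Y₁,…,Yₙ})₊^k] ≤ (2γ)^{-k/2} for every k ∈ ℕ. -/
/-!
Fix a threshold `t > 0` with `k ≤ 2γt²`. On `[t, ∞)` the function `y ↦ y^k e^{-γy²}` is
decreasing, so `(max_i Y_i)₊^k ≤ t^k (1 + e^{-γt²} ∑_i e^{γY_i²})` pointwise, and in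
expectation `E[(max_{i≤n} Y_i)₊^k] ≤ t^k (1 + (n+1) e^{-γt²} E[e^{γY²}])`. With
`t² = β log n / γ` and `β > 1` the correction term is `O(n^{1-β}) → 0`, while
`(2 log n)^{-k/2} t^k = (β/(2γ))^{k/2}`; finally let `β ↓ 1`.
-/

open MeasureTheory Filter Real Finset Topology

lemma pow_le_pow_mul_exp_sq_sub {γ t y : ℝ} {k : ℕ} (ht : 0 < t)
    (hk : (k : ℝ) ≤ 2 * γ * t ^ 2) (hty : t ≤ y) :
    y ^ k ≤ t ^ k * exp (γ * (y ^ 2 - t ^ 2)) := by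
  have hγ : 0 ≤ γ := by
    by_contra! h
    nlinarith [Nat.cast_nonneg (α := ℝ) k, mul_pos ht ht]
  have hq : 0 < y / t := div_pos (ht.trans_le hty) ht
  -- `log q ≤ q - 1` at `q = y / t`, and then `2 t (y - t) ≤ (y + t) (y - t)`.
  have hexponent : (k : ℝ) * log (y / t) ≤ γ * (y ^ 2 - t ^ 2) :=
    calc (k : ℝ) * log (y / t) ≤ 2 * γ * t ^ 2 * (y / t - 1) := by
          gcongr
          · exact log_nonneg ((one_le_div ht).mpr hty)
          · exact log_le_sub_one_of_pos hq
      _ = 2 * γ * t * (y - t) := by field_simp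
      _ ≤ γ * (y ^ 2 - t ^ 2) := by nlinarith [mul_nonneg hγ (sq_nonneg (y - t))]
  calc y ^ k = t ^ k * exp (k * log (y / t)) := by
        rw [exp_nat_mul, exp_log hq, div_pow, mul_div_cancel₀ _ (by positivity)]
    _ ≤ t ^ k * exp (γ * (y ^ 2 - t ^ 2)) := by gcongr

lemma max_mul_pow_le {γ t a y : ℝ} {k : ℕ} (ha : 0 ≤ a) (ht : 0 < t)
    (hk : (k : ℝ) ≤ 2 * γ * t ^ 2) :
    max (a * y) 0 ^ k ≤ (a * t) ^ k * (1 + exp (-(γ * t ^ 2)) * exp (γ * y ^ 2)) := by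
  rw [← mul_zero a, ← mul_max_of_nonneg _ _ ha, mul_pow, mul_pow, mul_assoc]
  gcongr
  rcases le_or_gt y t with hyt | hty
  · calc max y 0 ^ k ≤ t ^ k := pow_le_pow_left₀ (le_max_right _ _) (max_le hyt ht.le) k
      _ ≤ t ^ k * (1 + exp (-(γ * t ^ 2)) * exp (γ * y ^ 2)) :=
        le_mul_of_one_le_right (by positivity) (by simp only [le_add_iff_nonneg_right]; positivity)
  · calc max y 0 ^ k = y ^ k := by rw [max_eq_left (ht.trans hty).le]
      _ ≤ t ^ k * exp (γ * (y ^ 2 - t ^ 2)) := pow_le_pow_mul_exp_sq_sub ht hk hty.le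
      _ ≤ t ^ k * (1 + exp (-(γ * t ^ 2)) * exp (γ * y ^ 2)) := by
        rw [← exp_add, neg_add_eq_sub, ← mul_sub]
        gcongr
        exact le_add_of_nonneg_left zero_le_one

lemma max_mul_sup'_pow_le {ι : Type*} {s : Finset ι} (hs : s.Nonempty) (x : ι → ℝ)
    {γ t a : ℝ} {k : ℕ} (ha : 0 ≤ a) (ht : 0 < t) (hk : (k : ℝ) ≤ 2 * γ * t ^ 2) :
    max (a * s.sup' hs x) 0 ^ k ≤
      (a * t) ^ k * (1 + exp (-(γ * t ^ 2)) * ∑ i ∈ s, exp (γ * x i ^ 2)) := by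
  obtain ⟨j, hj, hsup⟩ := s.exists_mem_eq_sup' hs x
  rw [hsup]
  refine (max_mul_pow_le ha ht hk).trans ?_
  gcongr
  exact single_le_sum (f := fun i => exp (γ * x i ^ 2)) (fun i _ => (exp_pos _).le) hj

section

variable {Ω : Type*} [MeasurableSpace Ω] {μ : Measure Ω} [IsProbabilityMeasure μ]

lemma integral_max_mul_sup'_pow_le {ι : Type*} {s : Finset ι} (hs : s.Nonempty)
    {X : ι → Ω → ℝ} {γ t a : ℝ} {k : ℕ}
    (hX : ∀ i ∈ s, Integrable (fun ω => exp (γ * X i ω ^ 2)) μ)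
    (ha : 0 ≤ a) (ht : 0 < t) (hk : (k : ℝ) ≤ 2 * γ * t ^ 2) :
    ∫ ω, max (a * s.sup' hs (X · ω)) 0 ^ k ∂μ ≤
      (a * t) ^ k * (1 + exp (-(γ * t ^ 2)) * ∑ i ∈ s, ∫ ω, exp (γ * X i ω ^ 2) ∂μ) := by
  have hsum : Integrable (fun ω => ∑ i ∈ s, exp (γ * X i ω ^ 2)) μ :=
    integrable_finsetSum _ hX
  calc ∫ ω, max (a * s.sup' hs (X · ω)) 0 ^ k ∂μ
      ≤ ∫ ω, (a * t) ^ k * (1 + exp (-(γ * t ^ 2)) * ∑ i ∈ s, exp (γ * X i ω ^ 2)) ∂μ :=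
        integral_mono_of_nonneg (.of_forall fun ω => by positivity)
          (((integrable_const 1).add (hsum.const_mul _)).const_mul _)
          (.of_forall fun ω => max_mul_sup'_pow_le hs _ ha ht hk)
    _ = _ := by
        rw [integral_const_mul, integral_add (integrable_const 1) (hsum.const_mul _),
          integral_const_mul, integral_finsetSum _ hX]
        simp

/-- `E[(Zₙ)₊^k]`, where the maximum in `Zₙ` runs over the `n + 1` variables `Y 0, …, Y n`. -/
noncomputable def normalizedMaxMoment (μ : Measure Ω) (Y : ℕ → Ω → ℝ) (k n : ℕ) : ℝ :=
  ∫ ω, (max ((Real.sqrt (2 * Real.log n))⁻¹ *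
    (Finset.range (n + 1)).sup' (by simp) (fun i => Y i ω)) 0) ^ k ∂μ

lemma normalizedMaxMoment_le {Y : ℕ → Ω → ℝ} {γ β C : ℝ} {k n : ℕ}
    (hγ : 0 < γ) (hβ : 0 < β) (hInt : ∀ i, Integrable (fun ω => exp (γ * Y i ω ^ 2)) μ)
    (hC : ∀ i, ∫ ω, exp (γ * Y i ω ^ 2) ∂μ ≤ C)
    (hn : 0 < log n) (hk : (k : ℝ) ≤ 2 * β * log n) :
    normalizedMaxMoment μ Y k n ≤
      √(β / (2 * γ)) ^ k * (1 + (n : ℝ) ^ (-β) * ((n + 1) * C)) := by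
  -- The threshold `t` is chosen so that `exp (-γ t²) = n ^ (-β)`.
  set t := √(β * log n / γ)
  have ht2 : t ^ 2 = β * log n / γ := sq_sqrt (by positivity)
  have hat : (√(2 * log n))⁻¹ * t = √(β / (2 * γ)) := by
    rw [← sqrt_inv, ← sqrt_mul (by positivity)]
    congr 1
    field_simp
  have hexp : exp (-(γ * t ^ 2)) = (n : ℝ) ^ (-β) := by
    rw [rpow_def_of_pos (by exact_mod_cast Nat.pos_of_ne_zero (by rintro rfl; simp at hn)), ht2]
    congr 1
    field_simp
  have hsum : ∑ i ∈ range (n + 1), ∫ ω, exp (γ * Y i ω ^ 2) ∂μ ≤ (n + 1) * C := by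
    refine (sum_le_card_nsmul (range (n + 1)) _ C fun i _ => hC i).trans_eq ?_
    simp
  calc normalizedMaxMoment μ Y k n
      ≤ ((√(2 * log n))⁻¹ * t) ^ k *
          (1 + exp (-(γ * t ^ 2)) * ∑ i ∈ range (n + 1), ∫ ω, exp (γ * Y i ω ^ 2) ∂μ) :=
        integral_max_mul_sup'_pow_le _ (fun i _ => hInt i) (by positivity)
          (by positivity) (by rw [ht2]; field_simp; linarith)
    _ ≤ _ := by
        rw [hat, hexp]
        gcongr

lemma tendsto_rpow_neg_mul_add_one {β : ℝ} (hβ : 1 < β) :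
    Tendsto (fun n : ℕ => (n : ℝ) ^ (-β) * (n + 1)) atTop (𝓝 0) := by
  have hlim : Tendsto (fun x : ℝ => x ^ (-(β - 1)) + x ^ (-β)) atTop (𝓝 0) := by
    have h := (tendsto_rpow_neg_atTop (by linarith : 0 < β - 1)).add
      (tendsto_rpow_neg_atTop (by linarith : 0 < β))
    rwa [add_zero] at h
  refine (hlim.comp tendsto_natCast_atTop_atTop).congr' ?_
  filter_upwards [eventually_gt_atTop 0] with n hn
  have hn : (0 : ℝ) < n := by exact_mod_cast hn
  simp only [Function.comp, mul_add, mul_one, ← rpow_add_one hn.ne']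
  ring_nf

lemma limsup_normalizedMaxMoment_le {Y : ℕ → Ω → ℝ} {γ β C : ℝ} (k : ℕ) (hγ : 0 < γ)
    (hβ : 1 < β) (hInt : ∀ i, Integrable (fun ω => exp (γ * Y i ω ^ 2)) μ)
    (hC : ∀ i, ∫ ω, exp (γ * Y i ω ^ 2) ∂μ ≤ C) :
    limsup (normalizedMaxMoment μ Y k) atTop ≤ √(β / (2 * γ)) ^ k := by
  have hbound : Tendsto
      (fun n : ℕ => √(β / (2 * γ)) ^ k * (1 + (n : ℝ) ^ (-β) * ((n + 1) * C)))
      atTop (𝓝 (√(β / (2 * γ)) ^ k)) := by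
    simpa [mul_assoc] using (((tendsto_rpow_neg_mul_add_one hβ).mul_const C).const_add 1).const_mul
      (√(β / (2 * γ)) ^ k)
  have hlog : Tendsto (fun n : ℕ => log n) atTop atTop :=
    tendsto_log_atTop.comp tendsto_natCast_atTop_atTop
  have hle : ∀ᶠ n in atTop, normalizedMaxMoment μ Y k n ≤
      √(β / (2 * γ)) ^ k * (1 + (n : ℝ) ^ (-β) * ((n + 1) * C)) := by
    filter_upwards [hlog.eventually_gt_atTop 0, hlog.eventually_ge_atTop (k / (2 * β))]
      with n hpos hk
    refine normalizedMaxMoment_le hγ (by linarith) hInt hC hpos ?_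
    rwa [div_le_iff₀ (by linarith), mul_comm] at hk
  rw [← hbound.limsup_eq]
  exact limsup_le_limsup hle
    (isCoboundedUnder_le_of_le atTop fun n => integral_nonneg fun ω => by positivity)
    hbound.isBoundedUnder_le

end

theorem limsup_moment_normalized_max
    {Ω : Type*} [MeasurableSpace Ω] {μ : Measure Ω} [IsProbabilityMeasure μ]
    (γ : ℝ) (hγ : 0 < γ)
    (Y : ℕ → Ω → ℝ) (hmeas : ∀ i, Measurable (Y i))
    (hident : ∀ i, Measure.map (Y i) μ = Measure.map (Y 0) μ)
    (hexp : Integrable (fun ω => Real.exp (γ * (Y 0 ω) ^ 2)) μ)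
    (k : ℕ) :
    Filter.limsup (fun n : ℕ =>
        ∫ ω, (max ((Real.sqrt (2 * Real.log n))⁻¹ *
          (Finset.range (n + 1)).sup' (by simp) (fun i => Y i ω)) 0) ^ k ∂μ) atTop
      ≤ (2 * γ) ^ (-(k : ℝ) / 2) := by
  show limsup (normalizedMaxMoment μ Y k) atTop ≤ _
  have hidentExp (i : ℕ) : ProbabilityTheory.IdentDistrib (fun ω => exp (γ * Y i ω ^ 2))
      (fun ω => exp (γ * Y 0 ω ^ 2)) μ μ :=
    ProbabilityTheory.IdentDistrib.comp (u := fun y : ℝ => exp (γ * y ^ 2))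
      ⟨(hmeas i).aemeasurable, (hmeas 0).aemeasurable, hident i⟩ (by fun_prop)
  have hbound : ∀ β > 1, limsup (normalizedMaxMoment μ Y k) atTop ≤ √(β / (2 * γ)) ^ k :=
    fun β hβ => limsup_normalizedMaxMoment_le k hγ hβ
      (fun i => (hidentExp i).integrable_iff.mpr hexp) (fun i => (hidentExp i).integral_eq.le)
  have hlim : Tendsto (fun β : ℝ => √(β / (2 * γ)) ^ k) (𝓝[>] 1)
      (𝓝 ((2 * γ) ^ (-(k : ℝ) / 2))) := by
    have hval : √(1 / (2 * γ)) ^ k = (2 * γ) ^ (-(k : ℝ) / 2) := by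
      rw [sqrt_eq_rpow, ← rpow_natCast, ← rpow_mul (by positivity), one_div,
        inv_rpow (by positivity), ← rpow_neg (by positivity)]
      ring_nf
    rw [← hval]
    exact tendsto_nhdsWithin_of_tendsto_nhds
      (by fun_prop : Continuous fun β : ℝ => √(β / (2 * γ)) ^ k).continuousAt
  exact ge_of_tendsto hlim (eventually_nhdsWithin_of_forall hbound)
end

section
/- For the fractional Brownian bridge X(t) = Y(t) − r(t,1)Y(1) with Y a fractional Brownian motion of Hurst index H ∈ (0,1) and r(t,s) = ½(t^{2H}+s^{2H}−|t−s|^{2H}), the variance σ²(t) = Var X(t) = t^{2H} − ¼(t^{2H}+1−(1−t)^{2H})² attains its maximum on [0,1] at t = 1/2, with maximal value 2^{-2H} − 1/4. -/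
/-!
Write `u = t ^ a`, `v = (1 - t) ^ a` with `a = 2H` and `m = 2 ^ (-a)`, so that the claim is
`σ²(t) ≤ m - 1/4`. Two ways of completing the square bound `σ²`:

* `σ²(t) = (u + v) / 2 - (u - v)² / 4 - 1/4`, and for `a ≤ 1` concavity of `x ↦ x ^ a` gives
  `u + v ≤ 2m`;
* `σ²(t) ≤ (1 - t) u + t v - t(1 - t) = t(1 - t)(t ^ (a-1) + (1 - t) ^ (a-1) - 1)`, and for
  `a ≥ 1` concavity of `x ↦ x ^ (a-1)` bounds the last factor by
  `4m - 1 ≥ 0`, while `t(1 - t) ≤ 1/4`.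
-/

open Real Set

lemma rpow_add_rpow_le_two_mul_rpow_midpoint {e x y : ℝ} (he0 : 0 ≤ e) (he1 : e ≤ 1)
    (hx : 0 ≤ x) (hy : 0 ≤ y) : x ^ e + y ^ e ≤ 2 * ((x + y) / 2) ^ e := by
  have h := (concaveOn_rpow he0 he1).2 (mem_Ici.2 hx) (mem_Ici.2 hy)
    (by norm_num : (0 : ℝ) ≤ 1 / 2) (by norm_num : (0 : ℝ) ≤ 1 / 2) (by norm_num)
  simp only [smul_eq_mul] at h
  rw [show 1 / 2 * x + 1 / 2 * y = (x + y) / 2 by ring] at h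
  linarith

lemma rpow_add_rpow_one_sub_le {e t : ℝ} (he0 : 0 ≤ e) (he1 : e ≤ 1)
    (ht : t ∈ Icc (0 : ℝ) 1) : t ^ e + (1 - t) ^ e ≤ 2 * 2 ^ (-e) := by
  have h := rpow_add_rpow_le_two_mul_rpow_midpoint he0 he1 ht.1 (sub_nonneg.2 ht.2)
  rwa [add_sub_cancel, one_div, inv_rpow zero_le_two, ← rpow_neg zero_le_two] at h

lemma one_div_four_le_two_rpow_neg {a : ℝ} (ha : a ≤ 2) : 1 / 4 ≤ (2 : ℝ) ^ (-a) := by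
  calc (1 : ℝ) / 4 = 2 ^ (-2 : ℝ) := by norm_num [rpow_neg, rpow_two]
    _ ≤ 2 ^ (-a) := rpow_le_rpow_of_exponent_le one_le_two (by linarith)

/-- `a` stands for `2H`; the absolute value comes from `|t - s| ^ (2H)` at `s = 1`. -/
noncomputable def bridgeVariance (a t : ℝ) : ℝ :=
  t ^ a - (1 / 4) * (t ^ a + 1 - |1 - t| ^ a) ^ 2

lemma bridgeVariance_half (a : ℝ) : bridgeVariance a (1 / 2) = 2 ^ (-a) - 1 / 4 := by
  have h : |1 - (1 : ℝ) / 2| = 1 / 2 := by norm_num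
  rw [bridgeVariance, h, one_div, inv_rpow zero_le_two, ← rpow_neg zero_le_two]
  ring

lemma bridgeVariance_le_of_le_one {a t : ℝ} (ha0 : 0 ≤ a) (ha1 : a ≤ 1)
    (ht : t ∈ Icc (0 : ℝ) 1) : bridgeVariance a t ≤ 2 ^ (-a) - 1 / 4 := by
  have hsum := rpow_add_rpow_one_sub_le ha0 ha1 ht
  rw [bridgeVariance, abs_of_nonneg (sub_nonneg.2 ht.2)]
  nlinarith [sq_nonneg (t ^ a - (1 - t) ^ a)]

lemma bridgeVariance_le_one_sub_mul_rpow_add (a t : ℝ) :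
    bridgeVariance a t ≤ (1 - t) * t ^ a + t * |1 - t| ^ a - t * (1 - t) := by
  rw [bridgeVariance]
  nlinarith [sq_nonneg ((t ^ a + 1 - |1 - t| ^ a) / 2 - t)]

lemma bridgeVariance_le_of_one_le {a t : ℝ} (ha1 : 1 ≤ a) (ha2 : a ≤ 2)
    (ht : t ∈ Icc (0 : ℝ) 1) : bridgeVariance a t ≤ 2 ^ (-a) - 1 / 4 := by
  obtain ⟨ht0, ht1⟩ := ht
  have h1t : 0 ≤ 1 - t := sub_nonneg.2 ht1
  have hsplit {x : ℝ} (hx : 0 ≤ x) : x ^ a = x * x ^ (a - 1) := by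
    conv_lhs => rw [show a = 1 + (a - 1) by ring]
    rw [rpow_add' hx (by linarith), rpow_one]
  have hsum : t ^ (a - 1) + (1 - t) ^ (a - 1) ≤ 4 * 2 ^ (-a) := by
    have h := rpow_add_rpow_one_sub_le (e := a - 1) (by linarith) (by linarith) ⟨ht0, ht1⟩
    rw [show -(a - 1) = 1 + -a by ring, rpow_add two_pos, rpow_one] at h
    linarith
  have hprod : t * (1 - t) ≤ 1 / 4 := by nlinarith [sq_nonneg (t - 1 / 2)]
  have hm := one_div_four_le_two_rpow_neg ha2
  calc bridgeVariance a t
      ≤ t * (1 - t) * (t ^ (a - 1) + (1 - t) ^ (a - 1) - 1) := by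
        have h := bridgeVariance_le_one_sub_mul_rpow_add a t
        rw [abs_of_nonneg h1t, hsplit ht0, hsplit h1t] at h
        linarith
    _ ≤ t * (1 - t) * (4 * 2 ^ (-a) - 1) := by gcongr
    _ ≤ 1 / 4 * (4 * 2 ^ (-a) - 1) := by gcongr; linarith
    _ = 2 ^ (-a) - 1 / 4 := by ring

lemma isMaxOn_bridgeVariance_half {a : ℝ} (ha0 : 0 ≤ a) (ha2 : a ≤ 2) :
    IsMaxOn (bridgeVariance a) (Icc 0 1) (1 / 2) := by
  refine isMaxOn_iff.2 fun t ht => ?_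
  rw [bridgeVariance_half]
  rcases le_total a 1 with ha1 | ha1
  · exact bridgeVariance_le_of_le_one ha0 ha1 ht
  · exact bridgeVariance_le_of_one_le ha1 ha2 ht

theorem fractional_brownian_bridge_variance_max
    (H : ℝ) (hH : H ∈ Set.Ioo (0 : ℝ) 1)
    (σsq : ℝ → ℝ)
    (hσ : ∀ t : ℝ, σsq t
      = t ^ (2 * H) - (1 / 4) * (t ^ (2 * H) + 1 - |1 - t| ^ (2 * H)) ^ 2) :
    IsMaxOn σsq (Set.Icc (0 : ℝ) 1) (1 / 2) ∧
      σsq (1 / 2) = 2 ^ (-(2 * H)) - 1 / 4 := by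
  obtain rfl : σsq = bridgeVariance (2 * H) := funext hσ
  exact ⟨isMaxOn_bridgeVariance_half (by linarith [hH.1]) (by linarith [hH.2]),
    bridgeVariance_half _⟩
end
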